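/- The 5×5 matrices F₁ = E₃₂ + (q+q⁻¹)E₄₃ and F₂ = E₂₁ + E₅₄ satisfy the quantum Serre relations: F₂²F₁ - (q² + q⁻²)F₂F₁F₂ + F₁F₂² = 0 and F₁³F₂ - (q² + 1 + q⁻²)F₁²F₂F₁ + (q² + 1 + q⁻²)F₁F₂F₁² - F₂F₁³ = 0, for any nonzero q ∈ ℂ. -/

import Mathlib

open Matrix

/-!
The words `F₂²`, `F₂F₁F₂`, `F₁F₂F₁` and `F₁³` all vanish, since in each product of elementary
matrices some inner indices fail to match. Every monomial of both Serre relations contains one of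
these words, so each relation holds term by term, whatever the coefficients.
-/

def E (i j : Fin 5) : Matrix (Fin 5) (Fin 5) ℂ := Matrix.single i j 1

noncomputable def F₁ (q : ℂ) : Matrix (Fin 5) (Fin 5) ℂ := E 2 1 + (q + q⁻¹) • E 3 2
noncomputable def F₂ : Matrix (Fin 5) (Fin 5) ℂ := E 1 0 + E 4 3

lemma E_mul_E_same (i j k : Fin 5) : E i j * E j k = E i k := by
  rw [E, E, E, single_mul_single_same, one_mul]

lemma E_mul_E_of_ne {j k : Fin 5} (h : j ≠ k) (i l : Fin 5) : E i j * E k l = 0 :=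
  single_mul_single_of_ne (h := h) ..

lemma F₂_mul_F₂ : F₂ * F₂ = 0 := by
  simp [F₂, mul_add, add_mul, E_mul_E_of_ne]

lemma F₂_mul_F₁_mul_F₂ (q : ℂ) : F₂ * F₁ q * F₂ = 0 := by
  simp [F₁, F₂, mul_add, add_mul, E_mul_E_of_ne, E_mul_E_same]

lemma F₁_mul_F₂_mul_F₁ (q : ℂ) : F₁ q * F₂ * F₁ q = 0 := by
  simp [F₁, F₂, mul_add, add_mul, E_mul_E_of_ne, E_mul_E_same]

lemma F₁_mul_F₁_mul_F₁ (q : ℂ) : F₁ q * F₁ q * F₁ q = 0 := by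
  simp [F₁, mul_add, add_mul, E_mul_E_of_ne, E_mul_E_same]

theorem quantum_serre_f_general (q : ℂ) :
    F₂ * F₂ * F₁ q - (q ^ 2 + q⁻¹ ^ 2) • (F₂ * F₁ q * F₂) + F₁ q * F₂ * F₂ = 0 ∧
    F₁ q * F₁ q * F₁ q * F₂ - (q ^ 2 + 1 + q⁻¹ ^ 2) • (F₁ q * F₁ q * F₂ * F₁ q)
      + (q ^ 2 + 1 + q⁻¹ ^ 2) • (F₁ q * F₂ * F₁ q * F₁ q) - F₂ * F₁ q * F₁ q * F₁ q = 0 := by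
  constructor
  · rw [F₂_mul_F₂, F₂_mul_F₁_mul_F₂, mul_assoc, F₂_mul_F₂]
    simp
  · have h₁ : F₁ q * F₁ q * F₂ * F₁ q = 0 := by
      rw [mul_assoc (F₁ q), mul_assoc (F₁ q), F₁_mul_F₂_mul_F₁, mul_zero]
    have h₂ : F₂ * F₁ q * F₁ q * F₁ q = 0 := by
      rw [mul_assoc F₂, mul_assoc F₂, F₁_mul_F₁_mul_F₁, mul_zero]
    rw [F₁_mul_F₁_mul_F₁, h₁, F₁_mul_F₂_mul_F₁, h₂]
    simp

theorem quantum_serre_f (q : ℂ) (hq : q ≠ 0) :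
    F₂ * F₂ * F₁ q - (q ^ 2 + q⁻¹ ^ 2) • (F₂ * F₁ q * F₂) + F₁ q * F₂ * F₂ = 0 ∧
    F₁ q * F₁ q * F₁ q * F₂ - (q ^ 2 + 1 + q⁻¹ ^ 2) • (F₁ q * F₁ q * F₂ * F₁ q)
      + (q ^ 2 + 1 + q⁻¹ ^ 2) • (F₁ q * F₂ * F₁ q * F₁ q) - F₂ * F₁ q * F₁ q * F₁ q = 0 :=
  quantum_serre_f_general q
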